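/- For count sketch with h i.i.d. uniform on [c] and s i.i.d. Rademacher, the variance of the inner-product estimator satisfies Var(⟨CS(u), CS(v)⟩) ≤ (1/c)(‖u‖²‖v‖² + ⟨u, v⟩²) for all u, v ∈ R^n. -/
import Mathlib

open Finset

/-- Count sketch of a vector, with Boolean signs (`true ↦ +1`, `false ↦ -1`). -/
def countSketch {n c : ℕ} (h : Fin n → Fin c) (s : Fin n → Bool)
    (u : Fin n → ℝ) : Fin c → ℝ :=
  fun i => ∑ j, if h j = i then (if s j then (1 : ℝ) else -1) * u j else 0

/-- The inner product of the count sketches of `u` and `v`. -/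
def sketchInner {n c : ℕ} (h : Fin n → Fin c) (s : Fin n → Bool)
    (u v : Fin n → ℝ) : ℝ :=
  ∑ i : Fin c, countSketch h s u i * countSketch h s v i

namespace CSVar
variable {n c : ℕ}

noncomputable def sgn (b : Bool) : ℝ := if b then 1 else -1

lemma sum_prod_sgn_pow (e : Fin n → ℕ) :
    ∑ s : Fin n → Bool, ∏ i, (sgn (s i)) ^ (e i)
      = ∏ i, (if Even (e i) then (2:ℝ) else 0) := by
  rw [← Fintype.prod_sum (fun i (b : Bool) => (sgn b) ^ (e i))]
  refine Finset.prod_congr rfl fun i _ => ?_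
  rw [Fintype.sum_bool]
  by_cases he : Even (e i)
  · simp [sgn, he, he.neg_one_pow]; norm_num
  · simp [sgn, he, (Nat.not_even_iff_odd.mp he).neg_one_pow]

lemma prod_sgn_single (s : Fin n → Bool) (j : Fin n) :
    ∏ i, (sgn (s i)) ^ (if i = j then 1 else 0) = sgn (s j) := by
  have : ∀ i, (sgn (s i)) ^ (if i = j then 1 else 0) = if i = j then sgn (s i) else 1 := by
    intro i; split <;> simp
  rw [Finset.prod_congr rfl fun i _ => this i, Finset.prod_ite_eq' univ j (fun i => sgn (s i))]
  simp

lemma sum_sgn_pair (j k : Fin n) (hjk : j ≠ k) :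
    ∑ s : Fin n → Bool, sgn (s j) * sgn (s k) = 0 := by
  have e := sum_prod_sgn_pow (n := n) (fun i => (if i = j then 1 else 0) + (if i = k then 1 else 0))
  have h1 : ∀ s : Fin n → Bool,
      ∏ i, (sgn (s i)) ^ ((if i = j then 1 else 0) + (if i = k then 1 else 0))
        = sgn (s j) * sgn (s k) := by
    intro s
    simp only [pow_add, Finset.prod_mul_distrib, prod_sgn_single]
  rw [Finset.sum_congr rfl fun s _ => h1 s] at e
  rw [e]
  refine Finset.prod_eq_zero (mem_univ j) ?_
  simp [hjk, Nat.even_iff]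

lemma sum_sgn_quad (j k l m : Fin n) (hjk : j ≠ k) (hlm : l ≠ m) :
    ∑ s : Fin n → Bool, sgn (s j) * sgn (s k) * (sgn (s l) * sgn (s m))
      = if (j, k) = (l, m) ∨ (j, k) = (m, l) then (2:ℝ)^n else 0 := by
  have e := sum_prod_sgn_pow (n := n) (fun i =>
    ((if i = j then 1 else 0) + (if i = k then 1 else 0)) +
    ((if i = l then 1 else 0) + (if i = m then 1 else 0)))
  have h1 : ∀ s : Fin n → Bool,
      ∏ i, (sgn (s i)) ^ (((if i = j then 1 else 0) + (if i = k then 1 else 0)) +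
        ((if i = l then 1 else 0) + (if i = m then 1 else 0)))
        = sgn (s j) * sgn (s k) * (sgn (s l) * sgn (s m)) := by
    intro s
    simp only [pow_add, Finset.prod_mul_distrib, prod_sgn_single]
  rw [Finset.sum_congr rfl fun s _ => h1 s] at e
  rw [e]
  by_cases hcond : (j, k) = (l, m) ∨ (j, k) = (m, l)
  · rw [if_pos hcond]
    have : ∀ i : Fin n, (if Even (((if i = j then 1 else 0) + (if i = k then 1 else 0)) +
        ((if i = l then 1 else 0) + (if i = m then 1 else 0))) then (2:ℝ) else 0) = 2 := by
      intro i
      rcases hcond with hcond | hcond <;>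
      · rw [Prod.mk.injEq] at hcond
        obtain ⟨rfl, rfl⟩ := hcond
        rw [if_pos]
        exact ⟨(if i = j then 1 else 0) + (if i = k then 1 else 0), by ring⟩
    rw [Finset.prod_congr rfl fun i _ => this i, Finset.prod_const]
    simp
  · rw [if_neg hcond]
    push_neg at hcond
    obtain ⟨h1', h2'⟩ := hcond
    by_cases hjl : j = l
    · subst hjl
      have hkm : k ≠ m := fun e' => h1' (by rw [e'])
      refine Finset.prod_eq_zero (mem_univ k) ?_
      simp [hjk.symm, hlm.symm, hkm, Nat.even_iff]
    · by_cases hjm : j = m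
      · subst hjm
        have hkl : k ≠ l := fun e' => h2' (by rw [e'])
        refine Finset.prod_eq_zero (mem_univ k) ?_
        simp [hjk.symm, hkl, hlm, Nat.even_iff]
      · refine Finset.prod_eq_zero (mem_univ j) ?_
        simp [hjk, hjl, hjm, Nat.even_iff]

lemma sum_h_eq (hc : 0 < c) (j k : Fin n) (hjk : j ≠ k) :
    ∑ h : Fin n → Fin c, (if h j = h k then (1:ℝ) else 0) = (c:ℝ)^n / c := by
  have step1 : ∀ h : Fin n → Fin c,
      (if h j = h k then (1:ℝ) else 0) = ∑ a : Fin c, (if h j = a ∧ h k = a then (1:ℝ) else 0) := by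
    intro h
    by_cases e : h j = h k
    · rw [if_pos e]
      rw [Finset.sum_eq_single (h j)]
      · simp [e]
      · intro a _ ha; rw [if_neg]; rintro ⟨r1, _⟩; exact ha r1.symm
      · simp
    · rw [if_neg e]
      symm; refine Finset.sum_eq_zero fun a _ => ?_
      rw [if_neg]; rintro ⟨r1, r2⟩; exact e (r1.trans r2.symm)
  rw [Finset.sum_congr rfl fun h _ => step1 h, Finset.sum_comm]
  have step2 : ∀ a : Fin c, ∀ h : Fin n → Fin c,
      (if h j = a ∧ h k = a then (1:ℝ) else 0)
        = ∏ i, ((if i = j then (if h i = a then (1:ℝ) else 0) else 1) *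
                (if i = k then (if h i = a then (1:ℝ) else 0) else 1)) := by
    intro a h
    rw [Finset.prod_mul_distrib, Finset.prod_ite_eq' univ j, Finset.prod_ite_eq' univ k]
    simp only [mem_univ, if_true]
    by_cases e1 : h j = a <;> by_cases e2 : h k = a <;> simp [e1, e2]
  have step3 : ∀ a : Fin c,
      (∑ h : Fin n → Fin c, (if h j = a ∧ h k = a then (1:ℝ) else 0)) = (c:ℝ)^(n-2) := by
    intro a
    rw [Finset.sum_congr rfl fun h _ => step2 a h,
      ← Fintype.prod_sum (fun i (b : Fin c) =>
        ((if i = j then (if b = a then (1:ℝ) else 0) else 1) *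
         (if i = k then (if b = a then (1:ℝ) else 0) else 1)))]
    have factval : ∀ i : Fin n,
        (∑ b : Fin c, ((if i = j then (if b = a then (1:ℝ) else 0) else 1) *
          (if i = k then (if b = a then (1:ℝ) else 0) else 1)))
        = if i = j ∨ i = k then 1 else (c:ℝ) := by
      intro i
      by_cases e1 : i = j
      · subst e1
        simp [hjk, Finset.sum_ite_eq' univ a]
      · by_cases e2 : i = k
        · subst e2
          simp [e1, Finset.sum_ite_eq' univ a]
        · simp [e1, e2]
    rw [Finset.prod_congr rfl fun i _ => factval i]
    rw [Finset.prod_ite, Finset.prod_const_one, one_mul, Finset.prod_const]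
    congr 1
    have : (univ.filter fun i : Fin n => ¬(i = j ∨ i = k)) = ({j, k} : Finset (Fin n))ᶜ := by
      ext i; simp [not_or]
    rw [this, Finset.card_compl, Finset.card_insert_of_notMem (by simp [hjk]), Finset.card_singleton]
    simp
  rw [Finset.sum_congr rfl fun a _ => step3 a, Finset.sum_const, Finset.card_univ, Fintype.card_fin]
  have hn : 2 ≤ n := by
    by_contra hn
    interval_cases n
    · exact j.elim0
    · exact hjk (Subsingleton.elim j k)
  obtain ⟨m, rfl⟩ : ∃ m, n = m + 2 := ⟨n - 2, by omega⟩
  have hc' : (c:ℝ) ≠ 0 := Nat.cast_ne_zero.mpr hc.ne'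
  simp only [Nat.add_sub_cancel, nsmul_eq_mul]
  field_simp
  ring

noncomputable def dd (h : Fin n → Fin c) (p : Fin n × Fin n) : ℝ :=
  if h p.1 = h p.2 then 1 else 0

noncomputable def Y (h : Fin n → Fin c) (s : Fin n → Bool) (u v : Fin n → ℝ) : ℝ :=
  ∑ p ∈ (univ : Finset (Fin n)).offDiag,
    dd h p * (sgn (s p.1) * sgn (s p.2)) * (u p.1 * v p.2)

lemma sketchInner_eq (h : Fin n → Fin c) (s : Fin n → Bool) (u v : Fin n → ℝ) :
    sketchInner h s u v = (∑ j, u j * v j) + Y h s u v := by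
  have expand : sketchInner h s u v
      = ∑ p ∈ (univ : Finset (Fin n)) ×ˢ (univ : Finset (Fin n)),
          dd h p * (sgn (s p.1) * sgn (s p.2)) * (u p.1 * v p.2) := by
    unfold sketchInner countSketch
    simp only [Finset.sum_mul_sum]
    rw [Finset.sum_comm]
    rw [Finset.sum_product]
    refine Finset.sum_congr rfl fun j _ => ?_
    rw [Finset.sum_comm]
    refine Finset.sum_congr rfl fun k _ => ?_
    have key : ∀ i : Fin c,
        (if h j = i then (if s j then (1:ℝ) else -1) * u j else 0) *
        (if h k = i then (if s k then (1:ℝ) else -1) * v k else 0)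
        = if i = h j then dd h (j, k) * (sgn (s j) * sgn (s k)) * (u j * v k) else 0 := by
      intro i
      by_cases e1 : h j = i
      · subst e1
        by_cases e2 : h k = h j
        · simp [e2, dd, sgn]; try ring
        · simp [e2, Ne.symm e2, dd]
      · rw [if_neg e1, zero_mul, if_neg (fun e => e1 e.symm)]
    rw [Finset.sum_congr rfl fun i _ => key i, Finset.sum_ite_eq' univ (h j)]
    simp
  rw [expand, ← Finset.diag_union_offDiag (univ : Finset (Fin n)),
    Finset.sum_union (Finset.disjoint_diag_offDiag _), Finset.sum_diag]
  unfold Y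
  congr 1
  refine Finset.sum_congr rfl fun j _ => ?_
  simp [dd, sgn]
  cases s j <;> norm_num

lemma sum_Y_zero (h : Fin n → Fin c) (u v : Fin n → ℝ) :
    ∑ s : Fin n → Bool, Y h s u v = 0 := by
  unfold Y
  rw [Finset.sum_comm]
  refine Finset.sum_eq_zero fun p hp => ?_
  have hne : p.1 ≠ p.2 := (Finset.mem_offDiag.1 hp).2.2
  have : (∑ s : Fin n → Bool, dd h p * (sgn (s p.1) * sgn (s p.2)) * (u p.1 * v p.2))
      = dd h p * (u p.1 * v p.2) * ∑ s : Fin n → Bool, sgn (s p.1) * sgn (s p.2) := by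
    rw [Finset.mul_sum]
    exact Finset.sum_congr rfl fun s _ => by ring
  rw [this, sum_sgn_pair _ _ hne, mul_zero]

lemma offdiag_extract (p : Fin n × Fin n) (hp : p ∈ (univ : Finset (Fin n)).offDiag)
    (A : Fin n × Fin n → ℝ) :
    ∑ q ∈ (univ : Finset (Fin n)).offDiag,
      (if (p.1, p.2) = (q.1, q.2) ∨ (p.1, p.2) = (q.2, q.1) then A q else 0)
      = A p + A p.swap := by
  have hp' := (Finset.mem_offDiag.1 hp).2.2
  have hps : p.swap ∈ (univ : Finset (Fin n)).offDiag :=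
    Finset.mem_offDiag.2 ⟨mem_univ _, mem_univ _, fun e => hp' e.symm⟩
  have hcond : ∀ q : Fin n × Fin n,
      ((p.1, p.2) = (q.1, q.2) ∨ (p.1, p.2) = (q.2, q.1)) ↔
        q ∈ ({p, p.swap} : Finset (Fin n × Fin n)) := by
    intro q
    simp only [Finset.mem_insert, Finset.mem_singleton, Prod.mk.injEq, Prod.ext_iff,
      Prod.fst_swap, Prod.snd_swap]
    constructor
    · rintro (⟨a, b⟩ | ⟨a, b⟩)
      · exact Or.inl ⟨a.symm, b.symm⟩
      · exact Or.inr ⟨b.symm, a.symm⟩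
    · rintro (⟨a, b⟩ | ⟨a, b⟩)
      · exact Or.inl ⟨a.symm, b.symm⟩
      · exact Or.inr ⟨b.symm, a.symm⟩
  rw [Finset.sum_congr rfl fun q _ => if_congr (hcond q) rfl rfl]
  rw [Finset.sum_ite_mem, Finset.inter_eq_right.mpr
    (Finset.insert_subset hp (Finset.singleton_subset_iff.2 hps))]
  exact Finset.sum_pair (fun e => hp' (congrArg Prod.fst e))

lemma sum_Y_sq (h : Fin n → Fin c) (u v : Fin n → ℝ) :
    ∑ s : Fin n → Bool, (Y h s u v)^2
      = 2^n * ∑ p ∈ (univ : Finset (Fin n)).offDiag,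
          dd h p * ((u p.1 * v p.2) * (u p.1 * v p.2 + u p.2 * v p.1)) := by
  have expand : ∀ s : Fin n → Bool, (Y h s u v)^2
      = ∑ p ∈ (univ : Finset (Fin n)).offDiag, ∑ q ∈ (univ : Finset (Fin n)).offDiag,
          (dd h p * (u p.1 * v p.2)) * (dd h q * (u q.1 * v q.2)) *
            (sgn (s p.1) * sgn (s p.2) * (sgn (s q.1) * sgn (s q.2))) := by
    intro s
    rw [sq, Y, Finset.sum_mul_sum]
    exact Finset.sum_congr rfl fun p _ => Finset.sum_congr rfl fun q _ => by ring
  rw [Finset.sum_congr rfl fun s _ => expand s, Finset.sum_comm]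
  have inner : ∀ p ∈ (univ : Finset (Fin n)).offDiag,
      (∑ s : Fin n → Bool, ∑ q ∈ (univ : Finset (Fin n)).offDiag,
        (dd h p * (u p.1 * v p.2)) * (dd h q * (u q.1 * v q.2)) *
          (sgn (s p.1) * sgn (s p.2) * (sgn (s q.1) * sgn (s q.2))))
      = ∑ q ∈ (univ : Finset (Fin n)).offDiag,
          (if (p.1, p.2) = (q.1, q.2) ∨ (p.1, p.2) = (q.2, q.1) then
            2^n * ((dd h p * (u p.1 * v p.2)) * (dd h q * (u q.1 * v q.2))) else 0) := by
    intro p hp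
    rw [Finset.sum_comm]
    refine Finset.sum_congr rfl fun q hq => ?_
    have hps := (Finset.mem_offDiag.1 hp).2.2
    have hqs := (Finset.mem_offDiag.1 hq).2.2
    have : (∑ s : Fin n → Bool,
        (dd h p * (u p.1 * v p.2)) * (dd h q * (u q.1 * v q.2)) *
          (sgn (s p.1) * sgn (s p.2) * (sgn (s q.1) * sgn (s q.2))))
        = ((dd h p * (u p.1 * v p.2)) * (dd h q * (u q.1 * v q.2))) *
            ∑ s : Fin n → Bool, sgn (s p.1) * sgn (s p.2) * (sgn (s q.1) * sgn (s q.2)) := by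
      rw [Finset.mul_sum]
    rw [this, sum_sgn_quad _ _ _ _ hps hqs]
    split <;> ring
  rw [Finset.sum_congr rfl inner]
  rw [Finset.mul_sum]
  refine Finset.sum_congr rfl fun p hp => ?_
  rw [offdiag_extract p hp]
  have hps := (Finset.mem_offDiag.1 hp).2.2
  have hdswap : dd h p.swap = dd h p := by
    simp only [dd, Prod.fst_swap, Prod.snd_swap, eq_comm]
  rw [hdswap]
  simp only [Prod.fst_swap, Prod.snd_swap]
  by_cases hdd : h p.1 = h p.2 <;> simp [dd, hdd] <;> ring

end CSVar

open CSVar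

/-- Variance bound for the count sketch inner-product estimator:
`Var(⟨CS(u), CS(v)⟩) ≤ (1/c)(‖u‖²‖v‖² + ⟨u,v⟩²)`, where expectations are averages
over all `c^n · 2^n` choices of `(h, s)` (h i.i.d. uniform, s i.i.d. Rademacher). -/
theorem countSketch_inner_variance {n c : ℕ} (hc : 0 < c) (u v : Fin n → ℝ) :
    (∑ h : Fin n → Fin c, ∑ s : Fin n → Bool, (sketchInner h s u v) ^ 2)
        / ((c : ℝ) ^ n * 2 ^ n)
      - ((∑ h : Fin n → Fin c, ∑ s : Fin n → Bool, sketchInner h s u v)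
        / ((c : ℝ) ^ n * 2 ^ n)) ^ 2
    ≤ (1 / c) * ((∑ j, (u j) ^ 2) * (∑ j, (v j) ^ 2) + (∑ j, u j * v j) ^ 2) := by
  set IP : ℝ := ∑ j, u j * v j with hIP
  have hcR : (0:ℝ) < c := by exact_mod_cast hc
  have hcard : (Finset.univ : Finset (Fin n → Bool)).card = 2^n := by
    simp [Finset.card_univ]
  have hcardh : (Finset.univ : Finset (Fin n → Fin c)).card = c^n := by
    simp [Finset.card_univ]
  -- first moment
  have hS1 : (∑ h : Fin n → Fin c, ∑ s : Fin n → Bool, sketchInner h s u v)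
      = (c:ℝ)^n * 2^n * IP := by
    have : ∀ h : Fin n → Fin c, (∑ s : Fin n → Bool, sketchInner h s u v) = 2^n * IP := by
      intro h
      rw [Finset.sum_congr rfl fun s _ => sketchInner_eq h s u v, Finset.sum_add_distrib,
        sum_Y_zero h u v, add_zero, Finset.sum_const, hcard, nsmul_eq_mul]
      push_cast
      ring
    rw [Finset.sum_congr rfl fun h _ => this h, Finset.sum_const, hcardh, nsmul_eq_mul]
    push_cast
    ring
  -- second moment
  have hS2 : (∑ h : Fin n → Fin c, ∑ s : Fin n → Bool, (sketchInner h s u v)^2)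
      = (c:ℝ)^n * 2^n * IP^2
        + 2^n * ((c:ℝ)^n / c) * ∑ p ∈ (univ : Finset (Fin n)).offDiag,
            ((u p.1 * v p.2) * (u p.1 * v p.2 + u p.2 * v p.1)) := by
    have hper : ∀ h : Fin n → Fin c,
        (∑ s : Fin n → Bool, (sketchInner h s u v)^2)
        = 2^n * IP^2 + 2^n * ∑ p ∈ (univ : Finset (Fin n)).offDiag,
            dd h p * ((u p.1 * v p.2) * (u p.1 * v p.2 + u p.2 * v p.1)) := by
      intro h
      have : ∀ s : Fin n → Bool, (sketchInner h s u v)^2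
          = IP^2 + (2 * IP) * Y h s u v + (Y h s u v)^2 := by
        intro s; rw [sketchInner_eq h s u v]; ring
      rw [Finset.sum_congr rfl fun s _ => this s, Finset.sum_add_distrib,
        Finset.sum_add_distrib, Finset.sum_const, hcard, ← Finset.mul_sum,
        sum_Y_zero h u v, mul_zero, add_zero, sum_Y_sq h u v, nsmul_eq_mul]
      push_cast
      ring
    rw [Finset.sum_congr rfl fun h _ => hper h, Finset.sum_add_distrib, Finset.sum_const,
      hcardh, nsmul_eq_mul]
    congr 1
    · push_cast; ring
    rw [← Finset.mul_sum, Finset.sum_comm]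
    have : ∀ p ∈ (univ : Finset (Fin n)).offDiag,
        (∑ h : Fin n → Fin c, dd h p * ((u p.1 * v p.2) * (u p.1 * v p.2 + u p.2 * v p.1)))
        = ((c:ℝ)^n / c) * ((u p.1 * v p.2) * (u p.1 * v p.2 + u p.2 * v p.1)) := by
      intro p hp
      rw [← Finset.sum_mul]
      simp only [dd]
      rw [sum_h_eq hc p.1 p.2 (Finset.mem_offDiag.1 hp).2.2]
    rw [Finset.sum_congr rfl this, ← Finset.mul_sum]
    ring
  -- the off-diagonal sum is bounded
  have hZ : (∑ p ∈ (univ : Finset (Fin n)).offDiag,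
        ((u p.1 * v p.2) * (u p.1 * v p.2 + u p.2 * v p.1)))
      ≤ (∑ j, (u j)^2) * (∑ j, (v j)^2) + IP^2 := by
    have split : ∀ p : Fin n × Fin n,
        (u p.1 * v p.2) * (u p.1 * v p.2 + u p.2 * v p.1)
        = (u p.1 * v p.2)^2 + (u p.1 * v p.1) * (u p.2 * v p.2) := by
      intro p; ring
    rw [Finset.sum_congr rfl fun p _ => split p, Finset.sum_add_distrib]
    have hA : (∑ p ∈ (univ : Finset (Fin n)).offDiag, (u p.1 * v p.2)^2)
        ≤ (∑ j, (u j)^2) * (∑ j, (v j)^2) := by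
      have : (∑ j, (u j)^2) * (∑ j, (v j)^2)
          = ∑ p ∈ (univ : Finset (Fin n)) ×ˢ (univ : Finset (Fin n)), (u p.1 * v p.2)^2 := by
        rw [Finset.sum_mul_sum, Finset.sum_product]
        exact Finset.sum_congr rfl fun j _ => Finset.sum_congr rfl fun k _ => by ring
      rw [this]
      refine Finset.sum_le_sum_of_subset_of_nonneg ?_ (fun p _ _ => sq_nonneg _)
      intro p hp
      have := Finset.mem_offDiag.1 hp
      exact Finset.mem_product.2 ⟨this.1, this.2.1⟩
    have hB : (∑ p ∈ (univ : Finset (Fin n)).offDiag, (u p.1 * v p.1) * (u p.2 * v p.2))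
        ≤ IP^2 := by
      have htot : (∑ p ∈ (univ : Finset (Fin n)) ×ˢ (univ : Finset (Fin n)),
          (u p.1 * v p.1) * (u p.2 * v p.2)) = IP^2 := by
        rw [Finset.sum_product, hIP, sq, Finset.sum_mul_sum]
      have hsplit : (∑ p ∈ (univ : Finset (Fin n)) ×ˢ (univ : Finset (Fin n)),
          (u p.1 * v p.1) * (u p.2 * v p.2))
          = (∑ p ∈ (univ : Finset (Fin n)).diag, (u p.1 * v p.1) * (u p.2 * v p.2))
            + ∑ p ∈ (univ : Finset (Fin n)).offDiag, (u p.1 * v p.1) * (u p.2 * v p.2) := by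
        rw [← Finset.diag_union_offDiag (univ : Finset (Fin n)),
          Finset.sum_union (Finset.disjoint_diag_offDiag _)]
      have hdiag : (0:ℝ) ≤ ∑ p ∈ (univ : Finset (Fin n)).diag, (u p.1 * v p.1) * (u p.2 * v p.2) := by
        rw [Finset.sum_diag]
        exact Finset.sum_nonneg fun j _ => mul_self_nonneg _
      linarith [htot, hsplit, hdiag]
    exact add_le_add hA hB
  -- assemble
  have hN : (0:ℝ) < (c:ℝ)^n * 2^n := by positivity
  rw [hS1, hS2]
  have hred : ((c:ℝ)^n * 2^n * IP^2
        + 2^n * ((c:ℝ)^n / c) * ∑ p ∈ (univ : Finset (Fin n)).offDiag,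
            ((u p.1 * v p.2) * (u p.1 * v p.2 + u p.2 * v p.1))) / ((c:ℝ)^n * 2^n)
      - ((c:ℝ)^n * 2^n * IP / ((c:ℝ)^n * 2^n))^2
      = (∑ p ∈ (univ : Finset (Fin n)).offDiag,
            ((u p.1 * v p.2) * (u p.1 * v p.2 + u p.2 * v p.1))) / c := by
    field_simp
    ring
  rw [hred]
  rw [div_le_iff₀ hcR] at *
  calc (∑ p ∈ (univ : Finset (Fin n)).offDiag,
        ((u p.1 * v p.2) * (u p.1 * v p.2 + u p.2 * v p.1)))
      ≤ (∑ j, (u j)^2) * (∑ j, (v j)^2) + IP^2 := hZ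
    _ = 1 / ↑c * ((∑ j, (u j)^2) * (∑ j, (v j)^2) + IP^2) * c := by
        field_simp
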